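/- Let a₁, a₂, b₁, b₂ be integers with 2 ≤ a₁ < a₂ and 1 ≤ b₁ < b₂. In the Artin braid group B_{a₂}, the Couture–Perron braid B[a₁,a₂;b₁,b₂] is conjugate to W(a₂)^{b₁} · W(a₁)^{b₂-b₁}; more precisely, with Ω(a₁,a₂) := H(a₁,a₂)⁻¹ · G(a₁-2), one has Ω(a₁,a₂)⁻¹ · B[a₁,a₂;b₁,b₂] · Ω(a₁,a₂) = W(a₁) · W(a₂)^{b₁} · W(a₁)^{b₂-b₁-1}. -/

import Mathlib

/-- The braid relations for the Artin braid group `B_n`, as a set of elements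
of the free group on generators `σ_1, …, σ_{n-1}` (indexed by `Fin (n-1)`,
where the index `i : Fin (n-1)` corresponds to the generator `σ_{i+1}`). -/
def braidRels (n : ℕ) : Set (FreeGroup (Fin (n - 1))) :=
  {r | ∃ i j : Fin (n - 1), (j : ℕ) = (i : ℕ) + 1 ∧
      r = FreeGroup.of i * FreeGroup.of j * FreeGroup.of i *
          (FreeGroup.of j * FreeGroup.of i * FreeGroup.of j)⁻¹} ∪
  {r | ∃ i j : Fin (n - 1), (i : ℕ) + 2 ≤ (j : ℕ) ∧
      r = FreeGroup.of i * FreeGroup.of j * (FreeGroup.of j * FreeGroup.of i)⁻¹}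

/-- The Artin braid group `B_n`. -/
abbrev BraidGroup (n : ℕ) := PresentedGroup (braidRels n)

/-- The generator `σ_i` of `B_n`, for `1 ≤ i ≤ n - 1` (junk value `1` otherwise). -/
def σ (n i : ℕ) : BraidGroup n :=
  if h : 1 ≤ i ∧ i ≤ n - 1 then PresentedGroup.of (⟨i - 1, by omega⟩ : Fin (n - 1)) else 1

/-- `W n m` is the element `W(m) = σ_{m-1} σ_{m-2} ⋯ σ_1` of `B_n`, with `W(1) = 1`. -/
def W (n : ℕ) : ℕ → BraidGroup n
  | 0 => 1
  | m + 1 => σ n m * W n m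

/-- `eB m k` is the product `e(k)` of the generators `σ_i` of `B_m` over even `i`
with `2 ≤ i < k` (the factors commute, so the order is irrelevant; note `σ m 0 = 1`). -/
def eB (m k : ℕ) : BraidGroup m :=
  (((List.range k).filter (fun i => i % 2 = 0)).map (σ m)).prod

/-- `oB m k` is the product `o(k)` of the generators `σ_i` of `B_m` over odd `i`
with `1 ≤ i < k` (the factors commute, so the order is irrelevant). -/
def oB (m k : ℕ) : BraidGroup m :=
  (((List.range k).filter (fun i => i % 2 = 1)).map (σ m)).prod

/-- The elements `G(k)` of `B_m`: `G(0) = G(1) = 1`, and for `k ≥ 2`,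
`G(k) = e(k+1) o(k) G(k-2)` if `k` is odd, `G(k) = o(k+1) e(k) G(k-2)` if `k` is even. -/
def G (m : ℕ) : ℕ → BraidGroup m
  | 0 => 1
  | 1 => 1
  | k + 2 => if (k + 2) % 2 = 1 then eB m (k + 3) * oB m (k + 2) * G m k
             else oB m (k + 3) * eB m (k + 2) * G m k

/-- The Couture–Perron braid `B[a₁,a₂;b₁,b₂]` in `B_m`:
`(e(a₂)o(a₂))^{b₁} (e(a₁)o(a₁))^{b₂-b₁}` if `a₁` is odd, and
`(o(a₂)e(a₂))^{b₁} (o(a₁)e(a₁))^{b₂-b₁}` if `a₁` is even. -/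
def CP (m a₁ a₂ b₁ b₂ : ℕ) : BraidGroup m :=
  if a₁ % 2 = 1 then (eB m a₂ * oB m a₂) ^ b₁ * (eB m a₁ * oB m a₁) ^ (b₂ - b₁)
  else (oB m a₂ * eB m a₂) ^ b₁ * (oB m a₁ * eB m a₁) ^ (b₂ - b₁)

/-!
Only the far-commutativity relations of `B_n` enter. Write `Z(k)` for the factor `e(k)o(k)` or
`o(k)e(k)` of the Couture–Perron braid. It grows two generators at a time,
`Z(k+2) = Z(k) σ_{k+1} σ_k`, and since `σ_{k+1}σ_k` commutes with `G(k-2)` this gives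
`Z(k) G(k-2) = G(k-2) W(k)`: the element `G(a₁-2)` conjugates `Z(a₁)` to `W(a₁)`.
Peeling the generators of `Z(a₂)` off from the top, `Z(a₂) = Z(a₁) ρ(Z(a₂-a₁+1))`, and the image
under `ρ` of the previous identity for `a₂-a₁+1` shows `H ρ(Z(a₂-a₁+1)) = V H` with
`V = ρ(W(a₂-a₁+1)) = σ_{a₂-1} ⋯ σ_{a₁}`. As `H` commutes with `Z(a₁)` and `G(a₁-2)` with `V`,
`Ω` conjugates `Z(a₁)` to `W(a₁)` and `Z(a₂)` to `W(a₁) V`; finally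
`(W(a₁) V)^{b₁} W(a₁) = W(a₁) (V W(a₁))^{b₁}` and `V W(a₁) = W(a₂)`.
-/

lemma inv_mul_conj {M : Type*} [Group M] (h g x : M) :
    (h⁻¹ * g)⁻¹ * x * (h⁻¹ * g) = g⁻¹ * (h * x * h⁻¹) * g := by
  group

variable {n : ℕ}

lemma σ_zero : σ n 0 = 1 := dif_neg (by omega)

lemma σ_of_le {i : ℕ} (hi : n ≤ i) : σ n i = 1 := dif_neg (by omega)

lemma σ_commute {i j : ℕ} (hij : i + 2 ≤ j) : Commute (σ n i) (σ n j) := by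
  unfold σ
  split_ifs with hi hj
  · exact PresentedGroup.mk_eq_mk_of_mul_inv_mem (Or.inr ⟨_, _, by simp only; omega, rfl⟩)
  all_goals simp

lemma eB_succ (k : ℕ) : eB n (k + 1) = if k % 2 = 0 then eB n k * σ n k else eB n k := by
  split_ifs with hk <;> simp [eB, List.range_succ, List.filter_append, hk]

lemma oB_succ (k : ℕ) : oB n (k + 1) = if k % 2 = 1 then oB n k * σ n k else oB n k := by
  split_ifs with hk <;> simp [oB, List.range_succ, List.filter_append, hk]

/-- `e(k)o(k)` for odd `a` and `o(k)e(k)` for even `a`, so that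
`B[a₁,a₂;b₁,b₂] = (zigzag a₁ a₂)^{b₁} (zigzag a₁ a₁)^{b₂-b₁}`. -/
def zigzag (n a k : ℕ) : BraidGroup n :=
  if a % 2 = 1 then eB n k * oB n k else oB n k * eB n k

lemma CP_eq_zigzag (a₁ a₂ b₁ b₂ : ℕ) :
    CP n a₁ a₂ b₁ b₂ = zigzag n a₁ a₂ ^ b₁ * zigzag n a₁ a₁ ^ (b₂ - b₁) := by
  unfold CP zigzag
  split_ifs <;> rfl

lemma zigzag_add_two_left (a k : ℕ) : zigzag n (a + 2) k = zigzag n a k := by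
  simp [zigzag, Nat.add_mod_right]

lemma G_eq_zigzag_mul (k : ℕ) : G n k = zigzag n k k * G n (k - 2) := by
  match k with
  | 0 => simp [G, zigzag, eB, oB]
  | 1 => simp [G, zigzag, eB, oB, σ_zero]
  | k + 2 =>
    rw [G, zigzag, Nat.add_sub_cancel, eB_succ (k + 2), oB_succ (k + 2)]
    split_ifs <;> first | rfl | omega

section Commute

variable {x : BraidGroup n} {k : ℕ} (h : ∀ j < k, Commute x (σ n j))
include h

lemma commute_eB : Commute x (eB n k) := by
  induction k with
  | zero => exact Commute.one_right x
  | succ k ih =>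
    rw [eB_succ]
    split_ifs
    · exact (ih fun j hj => h j (by omega)).mul_right (h k (by omega))
    · exact ih fun j hj => h j (by omega)

lemma commute_oB : Commute x (oB n k) := by
  induction k with
  | zero => exact Commute.one_right x
  | succ k ih =>
    rw [oB_succ]
    split_ifs
    · exact (ih fun j hj => h j (by omega)).mul_right (h k (by omega))
    · exact ih fun j hj => h j (by omega)

lemma commute_zigzag (a : ℕ) : Commute x (zigzag n a k) := by
  unfold zigzag
  split_ifs
  · exact (commute_eB h).mul_right (commute_oB h)
  · exact (commute_oB h).mul_right (commute_eB h)

lemma commute_W : Commute x (W n k) := by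
  induction k with
  | zero => exact Commute.one_right x
  | succ k ih => exact (h k (by omega)).mul_right (ih fun j hj => h j (by omega))

lemma commute_G : Commute x (G n k) := by
  induction k using Nat.twoStepInduction with
  | zero | one => exact Commute.one_right x
  | more k ih _ =>
    rw [G_eq_zigzag_mul, Nat.add_sub_cancel]
    exact (commute_zigzag h _).mul_right (ih fun j hj => h j (by omega))

end Commute

lemma σ_commute_W {m k : ℕ} (hkm : k < m) : Commute (σ n m) (W n k) :=
  commute_W fun _ _ => (σ_commute (by omega)).symm

lemma σ_commute_G {m k : ℕ} (hkm : k < m) : Commute (σ n m) (G n k) :=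
  commute_G fun _ _ => (σ_commute (by omega)).symm

lemma zigzag_succ {a k : ℕ} (hak : a % 2 = k % 2) :
    zigzag n a (k + 1) = zigzag n a k * σ n k := by
  simp only [zigzag, eB_succ, oB_succ, hak]
  rcases Nat.mod_two_eq_zero_or_one k with hk | hk <;> simp [hk, mul_assoc]

lemma zigzag_add_two {a k : ℕ} (hak : a % 2 = k % 2) :
    zigzag n a (k + 2) = zigzag n a k * σ n (k + 1) * σ n k := by
  have he : Commute (σ n (k + 1)) (eB n k) := commute_eB fun _ _ => (σ_commute (by omega)).symm
  have ho : Commute (σ n (k + 1)) (oB n k) := commute_oB fun _ _ => (σ_commute (by omega)).symm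
  have hk1 : (k + 1) % 2 = 1 - k % 2 := by omega
  simp only [zigzag, eB_succ, oB_succ, hk1, hak]
  rcases Nat.mod_two_eq_zero_or_one k with hk | hk <;>
    simp [hk, mul_assoc, he.left_comm, ho.left_comm]

lemma zigzag_mul_G (k : ℕ) : zigzag n k k * G n (k - 2) = G n (k - 2) * W n k := by
  induction k using Nat.twoStepInduction with
  | zero => simp [zigzag, eB, oB, G, W]
  | one => simp [zigzag, eB, oB, G, W, σ_zero]
  | more k ih _ =>
    have hc : Commute (σ n (k + 1) * σ n k) (G n (k - 2)) :=
      commute_G fun _ _ => ((σ_commute (by omega)).mul_right (σ_commute (by omega))).symm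
    rw [Nat.add_sub_cancel]
    calc zigzag n (k + 2) (k + 2) * G n k
        = zigzag n k k * (σ n (k + 1) * σ n k) * (zigzag n k k * G n (k - 2)) := by
          rw [G_eq_zigzag_mul k, zigzag_add_two_left, zigzag_add_two rfl]; simp only [mul_assoc]
      _ = zigzag n k k * ((σ n (k + 1) * σ n k) * G n (k - 2)) * W n k := by
          rw [ih]; simp only [mul_assoc]
      _ = G n k * W n (k + 2) := by
          rw [hc.eq, G_eq_zigzag_mul k, W, W]; simp only [mul_assoc]

-- Outside `1 ≤ i ≤ n - 1` both sides are the junk value `1`, as `σ n 0 = σ n n = 1`.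
lemma rho_σ_eq {ρ : BraidGroup n → BraidGroup n} (hone : ρ 1 = 1)
    (hσ : ∀ i, 1 ≤ i → i ≤ n - 1 → ρ (σ n i) = σ n (n - i)) (i : ℕ) :
    ρ (σ n i) = σ n (n - i) := by
  by_cases hi : 1 ≤ i ∧ i ≤ n - 1
  · exact hσ i hi.1 hi.2
  · rw [σ, dif_neg hi, hone, σ, dif_neg (by omega)]

lemma rho_σ_of_add_eq {ρ : BraidGroup n → BraidGroup n} (hρ : ∀ i, ρ (σ n i) = σ n (n - i))
    {i j : ℕ} (h : i + j = n) : ρ (σ n i) = σ n j :=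
  (hρ i).trans (congrArg _ (by omega))

section Reversal

variable {ρ : BraidGroup n → BraidGroup n} (hmul : ∀ x y, ρ (x * y) = ρ y * ρ x)
  (hρ : ∀ i, ρ (σ n i) = σ n (n - i))
include hmul hρ

lemma commute_rho {x : BraidGroup n} {j : ℕ} (hj : j ≤ n) (h : Commute x (σ n (n - j))) :
    Commute (ρ x) (σ n j) := by
  have hj' : ρ (σ n (n - j)) = σ n j := rho_σ_of_add_eq hρ (by omega)
  show ρ x * σ n j = σ n j * ρ x
  rw [← hj', ← hmul, ← hmul, h.eq]

lemma rho_W_mul_W {a t : ℕ} (h : a + t = n) : ρ (W n (t + 1)) * W n a = W n n := by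
  induction t generalizing a with
  | zero =>
    obtain rfl : a = n := h
    simp [W, hρ, σ_of_le]
  | succ t ih =>
    rw [W, hmul, rho_σ_of_add_eq hρ (by omega : t + 1 + a = n), mul_assoc, ← W, ih (by omega)]

lemma zigzag_split {a t : ℕ} (h : a + t = n) :
    zigzag n a n = zigzag n a a * ρ (zigzag n (t + 1) (t + 1)) := by
  induction t using Nat.twoStepInduction generalizing a with
  | zero =>
    have h1 : zigzag n 1 1 = σ n 0 := by simp [zigzag, eB, oB]
    rw [h1, hρ, Nat.sub_zero, σ_of_le le_rfl, mul_one, ← h, Nat.add_zero]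
  | one =>
    have h2 : zigzag n 2 2 = σ n 1 := by simp [zigzag, eB, oB, List.range_succ, σ_zero]
    rw [h2, rho_σ_of_add_eq hρ (by omega : 1 + a = n), ← zigzag_succ rfl, h]
  | more t ih _ =>
    calc zigzag n a n
        = zigzag n (a + 2) (a + 2) * ρ (zigzag n (t + 1) (t + 1)) := by
          rw [← ih (by omega), zigzag_add_two_left]
      _ = zigzag n a a * ρ (zigzag n (t + 2 + 1) (t + 2 + 1)) := by
          rw [zigzag_add_two_left, zigzag_add_two rfl, zigzag_add_two_left, zigzag_add_two rfl,
            hmul, hmul, rho_σ_of_add_eq hρ (by omega : t + 1 + (a + 1) = n),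
            rho_σ_of_add_eq hρ (by omega : t + 1 + 1 + a = n)]
          simp only [mul_assoc]

lemma commute_rho_G_zigzag {a d : ℕ} (h : a + d + 1 = n) :
    Commute (ρ (G n d)) (zigzag n a a) :=
  commute_zigzag
    (fun j _ => commute_rho hmul hρ (by omega) (σ_commute_G (m := n - j) (by omega)).symm) a

lemma rho_G_mul_zigzag {a d : ℕ} (h : a + d + 1 = n) :
    ρ (G n d) * zigzag n a n = zigzag n a a * ρ (W n (d + 2)) * ρ (G n d) := by
  have hrev := congrArg ρ (zigzag_mul_G (n := n) (d + 2))
  rw [Nat.add_sub_cancel, hmul, hmul] at hrev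
  rw [zigzag_split hmul hρ (by omega : a + (d + 1) = n), ← mul_assoc,
    (commute_rho_G_zigzag hmul hρ h).eq, mul_assoc, hrev, mul_assoc]

lemma conj_zigzag_self {a d : ℕ} (h : a + d + 1 = n) :
    ((ρ (G n d))⁻¹ * G n (a - 2))⁻¹ * zigzag n a a * ((ρ (G n d))⁻¹ * G n (a - 2)) = W n a := by
  rw [inv_mul_conj, (commute_rho_G_zigzag hmul hρ h).mul_inv_cancel, mul_assoc, zigzag_mul_G,
    inv_mul_cancel_left]

lemma conj_zigzag_top {a d : ℕ} (h : a + d + 1 = n) :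
    ((ρ (G n d))⁻¹ * G n (a - 2))⁻¹ * zigzag n a n * ((ρ (G n d))⁻¹ * G n (a - 2)) =
      W n a * ρ (W n (d + 2)) := by
  have hV : Commute (ρ (W n (d + 2))) (G n (a - 2)) :=
    commute_G fun j _ => commute_rho hmul hρ (by omega) (σ_commute_W (m := n - j) (by omega)).symm
  rw [inv_mul_conj, rho_G_mul_zigzag hmul hρ h, mul_inv_cancel_right]
  calc (G n (a - 2))⁻¹ * (zigzag n a a * ρ (W n (d + 2))) * G n (a - 2)
      = (G n (a - 2))⁻¹ * (zigzag n a a * G n (a - 2)) * ρ (W n (d + 2)) := by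
        simp only [mul_assoc, hV.eq]
    _ = W n a * ρ (W n (d + 2)) := by rw [zigzag_mul_G, inv_mul_cancel_left]

end Reversal

theorem CP_conj_general (a₁ a₂ b₁ b₂ : ℕ) (h12 : a₁ < a₂)
    (hb : b₁ < b₂)
    (ρ : BraidGroup a₂ → BraidGroup a₂)
    (hmul : ∀ x y, ρ (x * y) = ρ y * ρ x) (hone : ρ 1 = 1)
    (hσ : ∀ i, 1 ≤ i → i ≤ a₂ - 1 → ρ (σ a₂ i) = σ a₂ (a₂ - i)) :
    IsConj (W a₂ a₂ ^ b₁ * W a₂ a₁ ^ (b₂ - b₁)) (CP a₂ a₁ a₂ b₁ b₂) ∧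
    ((ρ (G a₂ (a₂ - a₁ - 1)))⁻¹ * G a₂ (a₁ - 2))⁻¹ * CP a₂ a₁ a₂ b₁ b₂ *
        ((ρ (G a₂ (a₂ - a₁ - 1)))⁻¹ * G a₂ (a₁ - 2)) =
      W a₂ a₁ * W a₂ a₂ ^ b₁ * W a₂ a₁ ^ (b₂ - b₁ - 1) := by
  have hρ := rho_σ_eq hone hσ
  obtain ⟨d, hd⟩ : ∃ d, a₁ + d + 1 = a₂ := ⟨a₂ - a₁ - 1, by omega⟩
  obtain ⟨c, hc⟩ : ∃ c, b₂ - b₁ = c + 1 := ⟨b₂ - b₁ - 1, by omega⟩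
  rw [show a₂ - a₁ - 1 = d by omega, hc, Nat.add_sub_cancel, CP_eq_zigzag, hc]
  set Ω := (ρ (G a₂ d))⁻¹ * G a₂ (a₁ - 2)
  have hconj : ∀ x, Ω⁻¹ * x * Ω = MulAut.conj Ω⁻¹ x := by simp
  have key : Ω⁻¹ * (zigzag a₂ a₁ a₂ ^ b₁ * zigzag a₂ a₁ a₁ ^ (c + 1)) * Ω =
      W a₂ a₁ * W a₂ a₂ ^ b₁ * W a₂ a₁ ^ c := by
    rw [hconj, map_mul, map_pow, map_pow, ← hconj, ← hconj, conj_zigzag_top hmul hρ hd,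
      conj_zigzag_self hmul hρ hd, pow_succ', ← mul_assoc, mul_pow_mul,
      rho_W_mul_W hmul hρ (by omega : a₁ + (d + 1) = a₂)]
  refine ⟨?_, key⟩
  have hW : IsConj (W a₂ a₂ ^ b₁ * W a₂ a₁ ^ (c + 1)) (W a₂ a₁ * W a₂ a₂ ^ b₁ * W a₂ a₁ ^ c) :=
    isConj_iff.2 ⟨W a₂ a₁, by rw [pow_succ]; group⟩
  exact hW.trans (isConj_iff.2 ⟨Ω, by rw [← key]; group⟩)

/-- For `2 ≤ a₁ < a₂` and `1 ≤ b₁ < b₂`, the Couture–Perron braid `B[a₁,a₂;b₁,b₂]`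
is conjugate in `B_{a₂}` to `W(a₂)^{b₁} W(a₁)^{b₂-b₁}`; more precisely, with
`Ω(a₁,a₂) := H(a₁,a₂)⁻¹ G(a₁-2)` (where `H(a₁,a₂) := ρ(G(a₂-a₁-1))`), one has
`Ω⁻¹ B[a₁,a₂;b₁,b₂] Ω = W(a₁) W(a₂)^{b₁} W(a₁)^{b₂-b₁-1}`. -/
theorem CP_conj (a₁ a₂ b₁ b₂ : ℕ) (h1 : 2 ≤ a₁) (h12 : a₁ < a₂)
    (hb1 : 1 ≤ b₁) (hb : b₁ < b₂)
    (ρ : BraidGroup a₂ → BraidGroup a₂)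
    (hmul : ∀ x y, ρ (x * y) = ρ y * ρ x) (hone : ρ 1 = 1)
    (hσ : ∀ i, 1 ≤ i → i ≤ a₂ - 1 → ρ (σ a₂ i) = σ a₂ (a₂ - i)) :
    IsConj (W a₂ a₂ ^ b₁ * W a₂ a₁ ^ (b₂ - b₁)) (CP a₂ a₁ a₂ b₁ b₂) ∧
    ((ρ (G a₂ (a₂ - a₁ - 1)))⁻¹ * G a₂ (a₁ - 2))⁻¹ * CP a₂ a₁ a₂ b₁ b₂ *
        ((ρ (G a₂ (a₂ - a₁ - 1)))⁻¹ * G a₂ (a₁ - 2)) =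
      W a₂ a₁ * W a₂ a₂ ^ b₁ * W a₂ a₁ ^ (b₂ - b₁ - 1) :=
  CP_conj_general a₁ a₂ b₁ b₂ h12 hb ρ hmul hone hσ
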